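/- arXiv:2005.00332 — 4 statements merged into one kernel-verified Lean document; each statement's English description precedes it below -/
import Mathlib

section
/- Let s be a nonempty finite multiset of natural numbers each of which is at least 3, and suppose that ∑_{p ∈ s} (1/2 − 1/p) = 1 (as rational numbers). Then s is exactly one of the following 17 multisets: {3,3,3,3,3,3}, {3,3,3,4,4}, {3,3,3,3,6}, {3,3,4,12}, {3,3,6,6}, {3,4,4,6}, {4,4,4,4}, {3,12,12}, {4,8,8}, {4,6,12}, {6,6,6}, {5,5,10}, {3,8,24}, {3,9,18}, {3,10,15}, {4,5,20}, {3,7,42}. Conversely, each of these 17 multisets satisfies ∑_{p ∈ s} (1/2 − 1/p) = 1. -/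
/-!
A `p`-gon contributes `1/2 - 1/p ≥ 1/6` to the sum, so at most six faces meet at the vertex.
More generally, if `n` faces whose contributions sum to `r` are all at least `p`-gons, then
`n (1/2 - 1/p) ≤ r`, which bounds `p` in terms of `n` and `r`. Listing the face sizes in increasing
order, each one is therefore bounded by what the earlier ones leave of the sum, so the solutions
are found by a finite search.
-/

/-- The interior angle of a regular `p`-gon, as a fraction of a full turn. -/
def polygonAngle (p : ℕ) : ℚ := 1 / 2 - 1 / p

def leastEntryBound (n : ℕ) (r : ℚ) : ℕ := ⌊(n : ℚ) / (n / 2 - r)⌋₊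

/-- Contains every nondecreasing list of length `n` with entries at least `lo` whose polygon
angles sum to `r` (`mem_sortedAngleSolutions`). -/
def sortedAngleSolutions : ℕ → ℕ → ℚ → List (List ℕ)
  | 0, _, r => if r = 0 then [[]] else []
  | n + 1, lo, r =>
    (List.Ico lo (leastEntryBound (n + 1) r + 1)).flatMap fun a =>
      (sortedAngleSolutions n a (r - polygonAngle a)).map (a :: ·)

theorem polygonAngle_le_half (p : ℕ) : polygonAngle p ≤ 1 / 2 := by
  have : (0 : ℚ) ≤ 1 / p := by positivity
  unfold polygonAngle
  linarith

theorem polygonAngle_lt_half {p : ℕ} (hp : 0 < p) : polygonAngle p < 1 / 2 := by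
  have : (0 : ℚ) < 1 / p := by positivity
  unfold polygonAngle
  linarith

theorem polygonAngle_le_polygonAngle {p q : ℕ} (hp : 0 < p) (h : p ≤ q) :
    polygonAngle p ≤ polygonAngle q := by
  unfold polygonAngle
  gcongr

theorem length_mul_polygonAngle_le_sum {l : List ℕ} {a : ℕ} (ha : 0 < a) (h : ∀ p ∈ l, a ≤ p) :
    l.length * polygonAngle a ≤ (l.map polygonAngle).sum := by
  simpa using List.card_nsmul_le_sum (l.map polygonAngle) (polygonAngle a)
    (by simpa using fun p hp => polygonAngle_le_polygonAngle ha (h p hp))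

theorem sum_polygonAngle_le_length_div_two (l : List ℕ) :
    (l.map polygonAngle).sum ≤ l.length / 2 := by
  simpa [div_eq_mul_one_div (l.length : ℚ)] using
    List.sum_le_card_nsmul (l.map polygonAngle) (1 / 2)
      (by simpa using fun p _ => polygonAngle_le_half p)

theorem le_leastEntryBound {a n : ℕ} {r : ℚ} (ha : 0 < a) (hle : n * polygonAngle a ≤ r)
    (hlt : r < n / 2) : a ≤ leastEntryBound n r := by
  have ha' : (0 : ℚ) < a := by exact_mod_cast ha
  refine Nat.le_floor ((le_div_iff₀ (by linarith)).2 ?_)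
  rw [polygonAngle, mul_sub, mul_one_div, mul_one_div] at hle
  calc (a : ℚ) * (n / 2 - r) ≤ a * (n / a) := by gcongr; linarith
    _ = n := by field_simp

theorem mem_sortedAngleSolutions {l : List ℕ} {lo : ℕ} {r : ℚ} (hlo : 0 < lo)
    (hl : ∀ p ∈ l, lo ≤ p) (hsorted : l.Pairwise (· ≤ ·)) (hsum : (l.map polygonAngle).sum = r) :
    l ∈ sortedAngleSolutions l.length lo r := by
  induction l generalizing lo r with
  | nil => simp [sortedAngleSolutions, ← hsum]
  | cons a t ih =>
    rw [List.pairwise_cons] at hsorted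
    rw [List.map_cons, List.sum_cons] at hsum
    have hlo_le : lo ≤ a := hl a List.mem_cons_self
    have ha : 0 < a := by omega
    have hbound : a ≤ leastEntryBound (t.length + 1) r := by
      refine le_leastEntryBound ha ?_ ?_
      · simpa [hsum] using
          length_mul_polygonAngle_le_sum (l := a :: t) ha (by simpa using hsorted.1)
      · push_cast
        linarith [polygonAngle_lt_half ha, sum_polygonAngle_le_length_div_two t]
    have htail : t ∈ sortedAngleSolutions t.length a (r - polygonAngle a) :=
      ih ha hsorted.1 hsorted.2 (by linarith)
    simp only [sortedAngleSolutions, List.length_cons, List.mem_flatMap, List.mem_map, List.Ico.mem]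
    exact ⟨a, ⟨hlo_le, by omega⟩, t, htail, rfl⟩

theorem curvature_zero_multiset_classification_general
    (s : Multiset ℕ) (h3 : ∀ p ∈ s, 3 ≤ p) :
    (s.map (fun p => (1 : ℚ) / 2 - 1 / (p : ℚ))).sum = 1 ↔
      (s = ({3, 3, 3, 3, 3, 3} : Multiset ℕ) ∨
        s = ({3, 3, 3, 4, 4} : Multiset ℕ) ∨
        s = ({3, 3, 3, 3, 6} : Multiset ℕ) ∨
        s = ({3, 3, 4, 12} : Multiset ℕ) ∨
        s = ({3, 3, 6, 6} : Multiset ℕ) ∨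
        s = ({3, 4, 4, 6} : Multiset ℕ) ∨
        s = ({4, 4, 4, 4} : Multiset ℕ) ∨
        s = ({3, 12, 12} : Multiset ℕ) ∨
        s = ({4, 8, 8} : Multiset ℕ) ∨
        s = ({4, 6, 12} : Multiset ℕ) ∨
        s = ({6, 6, 6} : Multiset ℕ) ∨
        s = ({5, 5, 10} : Multiset ℕ) ∨
        s = ({3, 8, 24} : Multiset ℕ) ∨
        s = ({3, 9, 18} : Multiset ℕ) ∨
        s = ({3, 10, 15} : Multiset ℕ) ∨
        s = ({4, 5, 20} : Multiset ℕ) ∨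
        s = ({3, 7, 42} : Multiset ℕ)) := by
  -- The cast `(p : ℚ)` elaborates as the monadic coercion of `s` to `Multiset ℚ`.
  simp only [bind_pure_comp, Multiset.fmap_def, Multiset.map_map]
  change (s.map polygonAngle).sum = 1 ↔ _
  refine ⟨fun hsum => ?_, fun h => ?_⟩
  · obtain ⟨l, rfl, hsorted⟩ : ∃ l : List ℕ, (l : Multiset ℕ) = s ∧ l.Pairwise (· ≤ ·) :=
      ⟨s.sort, Multiset.sort_eq _ _, Multiset.pairwise_sort _ _⟩
    rw [Multiset.map_coe, Multiset.sum_coe] at hsum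
    simp only [Multiset.mem_coe] at h3
    have hlen : l.length ≤ 6 := by
      have := length_mul_polygonAngle_le_sum (by norm_num) h3
      norm_num [hsum, polygonAngle] at this
      exact_mod_cast (by linarith : (l.length : ℚ) ≤ 6)
    have hmem := mem_sortedAngleSolutions (by norm_num) h3 hsorted hsum
    generalize l.length = n at hlen hmem
    clear h3 hsorted hsum
    revert l
    revert n
    set_option synthInstance.maxSize 1024 in decide +kernel
  · obtain rfl | rfl | rfl | rfl | rfl | rfl | rfl | rfl | rfl | rfl | rfl | rfl | rfl | rfl | rfl |
      rfl | rfl := h <;> decide +kernel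

/-- A nonempty finite multiset `s` of natural numbers, each at least 3, satisfies
`∑_{p ∈ s} (1/2 − 1/p) = 1` (in ℚ) iff it is exactly one of the 17 listed multisets. -/
theorem curvature_zero_multiset_classification
    (s : Multiset ℕ) (hne : s ≠ 0) (h3 : ∀ p ∈ s, 3 ≤ p) :
    (s.map (fun p => (1 : ℚ) / 2 - 1 / (p : ℚ))).sum = 1 ↔
      (s = ({3, 3, 3, 3, 3, 3} : Multiset ℕ) ∨
        s = ({3, 3, 3, 4, 4} : Multiset ℕ) ∨
        s = ({3, 3, 3, 3, 6} : Multiset ℕ) ∨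
        s = ({3, 3, 4, 12} : Multiset ℕ) ∨
        s = ({3, 3, 6, 6} : Multiset ℕ) ∨
        s = ({3, 4, 4, 6} : Multiset ℕ) ∨
        s = ({4, 4, 4, 4} : Multiset ℕ) ∨
        s = ({3, 12, 12} : Multiset ℕ) ∨
        s = ({4, 8, 8} : Multiset ℕ) ∨
        s = ({4, 6, 12} : Multiset ℕ) ∨
        s = ({6, 6, 6} : Multiset ℕ) ∨
        s = ({5, 5, 10} : Multiset ℕ) ∨
        s = ({3, 8, 24} : Multiset ℕ) ∨
        s = ({3, 9, 18} : Multiset ℕ) ∨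
        s = ({3, 10, 15} : Multiset ℕ) ∨
        s = ({4, 5, 20} : Multiset ℕ) ∨
        s = ({3, 7, 42} : Multiset ℕ)) :=
  curvature_zero_multiset_classification_general s h3
end

section
/- Let l be a nonempty list of natural numbers each of which is at least 3, and suppose that ∑_{p ∈ l} (1/2 − 1/p) = 1 (as rational numbers). Then, up to cyclic rotation and reversal, l equals one of the following 21 lists: (3,3,3,4,4), (3,3,3,3,3,3), (3,4,4,6), (3,3,6,6), (3,3,3,3,6), (3,3,4,3,4), (3,6,3,6), (4,4,4,4), (3,4,6,4), (3,3,4,12), (4,8,8), (3,12,12), (6,6,6), (5,5,10), (3,8,24), (3,9,18), (3,10,15), (4,5,20), (3,7,42), (4,6,12), (3,4,3,12); that is, there exists a list l' in this collection such that l is a rotation of l' or a rotation of the reverse of l'. Conversely, every list in this collection satisfies ∑_{p ∈ l} (1/2 − 1/p) = 1. -/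
/-!
Each term `1/2 − 1/p` is at least `1/6`, so a solution has at most six entries, and its sorted
rearrangement `a₁ ≤ ⋯ ≤ aₖ` satisfies `∑ 1/aᵢ = k/2 − 1`. In a nondecreasing list of length `n`
with reciprocal sum `r`, the first entry `a` obeys `a ≤ n/r`; bounding the entries one at a time
this way leaves a small search tree containing every sorted solution, and it remains to check
that every rearrangement of its leaves is a rotation of a listed face-sequence or of its reverse.
-/

/-- The 21 cyclic face-sequences of combinatorial curvature 0, as lists. -/
def curvatureZeroFaceSequences : List (List ℕ) :=
  [[3, 3, 3, 4, 4], [3, 3, 3, 3, 3, 3], [3, 4, 4, 6], [3, 3, 6, 6],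
   [3, 3, 3, 3, 6], [3, 3, 4, 3, 4], [3, 6, 3, 6], [4, 4, 4, 4],
   [3, 4, 6, 4], [3, 3, 4, 12], [4, 8, 8], [3, 12, 12], [6, 6, 6],
   [5, 5, 10], [3, 8, 24], [3, 9, 18], [3, 10, 15], [4, 5, 20],
   [3, 7, 42], [4, 6, 12], [3, 4, 3, 12]]

theorem List.sum_map_one_div_le {l : List ℕ} {a : ℕ} (ha : 0 < a) (h : ∀ p ∈ l, a ≤ p) :
    (l.map fun p : ℕ => 1 / (p : ℚ)).sum ≤ l.length / a := by
  have hle : ∀ x ∈ l.map fun p : ℕ => 1 / (p : ℚ), x ≤ 1 / a := by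
    rw [List.forall_mem_map]
    exact fun p hp => by gcongr; exact h p hp
  simpa [div_eq_mul_one_div (l.length : ℚ)] using List.sum_le_card_nsmul _ _ hle

theorem List.sum_map_half_sub_one_div (l : List ℕ) :
    (l.map fun p : ℕ => 1 / 2 - 1 / (p : ℚ)).sum =
      l.length / 2 - (l.map fun p : ℕ => 1 / (p : ℚ)).sum := by
  induction l with
  | nil => simp
  | cons a t ih => simp only [List.map_cons, List.sum_cons, ih, List.length_cons]; push_cast; ring

def egyptianFractionLists : ℕ → ℕ → ℚ → List (List ℕ)
  | 0, _, r => if r = 0 then [[]] else []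
  | n + 1, lo, r => (List.range' lo (⌊(n + 1 : ℚ) / r⌋₊ + 1 - lo)).flatMap fun a =>
      (egyptianFractionLists n a (r - 1 / a)).map (a :: ·)

theorem mem_egyptianFractionLists {l : List ℕ} (hl : l.Pairwise (· ≤ ·)) {lo : ℕ} (hlo : 0 < lo)
    (h : ∀ p ∈ l, lo ≤ p) :
    l ∈ egyptianFractionLists l.length lo (l.map fun p : ℕ => 1 / (p : ℚ)).sum := by
  induction l generalizing lo with
  | nil => simp [egyptianFractionLists]
  | cons a t ih =>
    obtain ⟨hat, ht⟩ := List.pairwise_cons.1 hl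
    have hla : lo ≤ a := h a List.mem_cons_self
    have ha : 0 < a := hlo.trans_le hla
    set r := ((a :: t).map fun p : ℕ => 1 / (p : ℚ)).sum
    have hr : 0 < r := List.sum_pos _
      (List.forall_mem_map.2 fun p hp => by have := hlo.trans_le (h p hp); positivity) (by simp)
    have hbound : a ≤ ⌊(t.length + 1 : ℚ) / r⌋₊ := by
      have hsum : r ≤ ((a :: t).length : ℚ) / a :=
        List.sum_map_one_div_le ha (List.forall_mem_cons.2 ⟨le_rfl, hat⟩)
      rw [List.length_cons, Nat.cast_succ, le_div_iff₀ (by positivity)] at hsum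
      apply Nat.le_floor
      rwa [le_div_iff₀ hr, mul_comm]
    simp only [List.length_cons, egyptianFractionLists, List.mem_flatMap, List.mem_range'_1,
      List.mem_map]
    refine ⟨a, ⟨hla, by omega⟩, t, ?_, rfl⟩
    convert ih ht ha hat using 2
    simp [r]

theorem length_le_six_of_sum_half_sub_one_div_eq_one {l : List ℕ} (h3 : ∀ p ∈ l, 3 ≤ p)
    (h : (l.map fun p : ℕ => 1 / 2 - 1 / (p : ℚ)).sum = 1) : l.length ≤ 6 := by
  have hle := List.sum_map_one_div_le (by norm_num) h3
  rw [List.sum_map_half_sub_one_div] at h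
  have : (l.length : ℚ) ≤ 6 := by push_cast at hle; linarith
  exact_mod_cast this

theorem exists_isRotated_of_mem_permutations'_egyptianFractionLists :
    ∀ k ≤ 6, ∀ s ∈ egyptianFractionLists k 3 (k / 2 - 1), ∀ t ∈ s.permutations',
      ∃ l' ∈ curvatureZeroFaceSequences, t ~r l' ∨ t ~r l'.reverse := by
  decide +kernel

/-- Any nonempty list of naturals, each at least 3, with `∑ (1/2 − 1/p) = 1` (in ℚ)
is, up to cyclic rotation and reversal, one of the 21 listed face-sequences; and
conversely every listed face-sequence satisfies `∑ (1/2 − 1/p) = 1`. -/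
theorem curvature_zero_face_sequence_classification :
    (∀ l : List ℕ, l ≠ [] → (∀ p ∈ l, 3 ≤ p) →
      (l.map (fun p => (1 : ℚ) / 2 - 1 / (p : ℚ))).sum = 1 →
      ∃ l' ∈ curvatureZeroFaceSequences, l ~r l' ∨ l ~r l'.reverse) ∧
    (∀ l' ∈ curvatureZeroFaceSequences,
      (l'.map (fun p => (1 : ℚ) / 2 - 1 / (p : ℚ))).sum = 1) := by
  refine ⟨fun l _ h3 hsum => ?_, by decide +kernel⟩
  simp only [bind_pure_comp, List.map_eq_map, List.map_map, Function.comp_def] at hsum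
  have hperm : (l.insertionSort (· ≤ ·)).Perm l := List.perm_insertionSort _ l
  have hmem := mem_egyptianFractionLists (List.pairwise_insertionSort _ l) (by norm_num : 0 < 3)
    fun p hp => h3 p (hperm.subset hp)
  have hrecip : (l.map fun p : ℕ => 1 / (p : ℚ)).sum = l.length / 2 - 1 := by
    rw [List.sum_map_half_sub_one_div] at hsum; linarith
  rw [hperm.length_eq, (hperm.map _).sum_eq, hrecip] at hmem
  exact exists_isRotated_of_mem_permutations'_egyptianFractionLists l.length
    (length_le_six_of_sum_half_sub_one_div_eq_one h3 hsum) _ hmem l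
    (List.mem_permutations'.2 hperm.symm)
end

section
/- Let s be a finite multiset of natural numbers each of which is at least 3 with ∑_{p ∈ s} (1/2 − 1/p) = 1 (as rational numbers). Then every element p of s satisfies p ≤ 42; that is, no face of size larger than 42 can occur at a vertex of combinatorial curvature 0. -/
/-!
Remove one face of size `p ≥ 43`. Every remaining term `1/2 - 1/q` is at least `1/6` and they sum
to `1/2 + 1/p < 2/3`, so at most three faces remain. None or one is impossible. Two faces `a, b`
give `1/a + 1/b + 1/p = 1/2`; the largest value of `1/a + 1/b` below `1/2` is `1/3 + 1/7 = 10/21`,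
so `1/p ≥ 1/42` (the arithmetic behind Hurwitz's `84 (g - 1)` bound). Three faces `a, b, c` give
`1/a + 1/b + 1/c + 1/p = 1`, which forces `p ≤ 12`.
-/

lemma one_div_six_le_half_sub_one_div {q : ℕ} (hq : 3 ≤ q) :
    (1 : ℚ) / 6 ≤ 1 / 2 - 1 / q := by
  have : (3 : ℚ) ≤ q := by exact_mod_cast hq
  have : (1 : ℚ) / q ≤ 1 / 3 := one_div_le_one_div_of_le (by norm_num) this
  linarith

lemma card_le_three_of_sum_half_sub_one_div_eq {t : Multiset ℕ} {p : ℕ}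
    (ht : ∀ q ∈ t, 3 ≤ q) (hp : 7 ≤ p)
    (h : (t.map fun q : ℕ => (1 : ℚ) / 2 - 1 / (q : ℚ)).sum = 1 / 2 + 1 / p) :
    Multiset.card t ≤ 3 := by
  have hlow := Multiset.card_nsmul_le_sum (s := t.map fun q : ℕ => (1 : ℚ) / 2 - 1 / (q : ℚ))
    (a := 1 / 6) fun x hx => by
      obtain ⟨q, hq, rfl⟩ := Multiset.mem_map.mp hx
      exact one_div_six_le_half_sub_one_div (ht q hq)
  have : (1 : ℚ) / p ≤ 1 / 7 := one_div_le_one_div_of_le (by norm_num) (by exact_mod_cast hp)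
  rw [Multiset.card_map, nsmul_eq_mul, h] at hlow
  have : Multiset.card t < 4 := by exact_mod_cast (by linarith : (Multiset.card t : ℚ) < 4)
  omega

/-- The bound `10 / 21 = 1 / 3 + 1 / 7` is attained at `{a, b} = {3, 7}`. -/
lemma one_div_add_one_div_le_ten_div_twentyOne {a b : ℕ} (ha : 3 ≤ a) (hb : 3 ≤ b)
    (h : (1 : ℚ) / a + 1 / b < 1 / 2) : (1 : ℚ) / a + 1 / b ≤ 10 / 21 := by
  by_contra! hgt
  have bound {x y : ℕ} (hy : 3 ≤ y) (hxy : (10 : ℚ) / 21 < 1 / x + 1 / y) : x ≤ 6 := by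
    have : (1 : ℚ) / y ≤ 1 / 3 := one_div_le_one_div_of_le (by norm_num) (by exact_mod_cast hy)
    by_contra! hx
    have : (1 : ℚ) / x ≤ 1 / 7 := one_div_le_one_div_of_le (by norm_num) (by exact_mod_cast hx)
    linarith
  have ha6 := bound hb hgt
  have hb6 := bound (x := b) ha (by linarith)
  interval_cases a <;> interval_cases b <;> norm_num at *

lemma le_fortyTwo_of_one_div_add_one_div_add_one_div_eq_half {a b p : ℕ}
    (ha : 3 ≤ a) (hb : 3 ≤ b)
    (h : (1 : ℚ) / a + 1 / b + 1 / p = 1 / 2) : p ≤ 42 := by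
  rcases Nat.eq_zero_or_pos p with rfl | hp
  · exact Nat.zero_le _
  have hp' : (0 : ℚ) < p := by exact_mod_cast hp
  have hinv : (0 : ℚ) < 1 / p := by positivity
  have := one_div_add_one_div_le_ten_div_twentyOne ha hb (by linarith)
  have : (1 : ℚ) / 42 ≤ 1 / p := by linarith
  exact_mod_cast (one_div_le_one_div (by norm_num) hp').mp this

lemma le_twelve_of_one_div_add_one_div_add_one_div_add_one_div_eq_one {a b c p : ℕ}
    (ha : 3 ≤ a) (hb : 3 ≤ b) (hc : 3 ≤ c)
    (h : (1 : ℚ) / a + 1 / b + 1 / c + 1 / p = 1) : p ≤ 12 := by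
  rcases Nat.eq_zero_or_pos p with rfl | hp
  · exact Nat.zero_le _
  by_contra! hp13
  have : (0 : ℚ) < 1 / p := by positivity
  have : (1 : ℚ) / p ≤ 1 / 13 := one_div_le_one_div_of_le (by norm_num) (by exact_mod_cast hp13)
  have le_third {x : ℕ} (hx : 3 ≤ x) : (1 : ℚ) / x ≤ 1 / 3 :=
    one_div_le_one_div_of_le (by norm_num) (by exact_mod_cast hx)
  have eq_three {x : ℕ} (hx : 3 ≤ x) (hlt : (1 : ℚ) / 4 < 1 / x) : x = 3 := by
    by_contra hx3
    have hx4 : (4 : ℚ) ≤ x := by exact_mod_cast (by omega : 4 ≤ x)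
    have : (1 : ℚ) / x ≤ 1 / 4 := one_div_le_one_div_of_le (by norm_num) hx4
    linarith
  obtain rfl := eq_three ha (by linarith [le_third hb, le_third hc])
  obtain rfl := eq_three hb (by linarith [le_third hc])
  obtain rfl := eq_three hc (by linarith)
  norm_num at h
  linarith

lemma le_fortyTwo_of_sum_half_sub_one_div_eq {t : Multiset ℕ} {p : ℕ}
    (ht : ∀ q ∈ t, 3 ≤ q)
    (h : (t.map fun q : ℕ => (1 : ℚ) / 2 - 1 / (q : ℚ)).sum = 1 / 2 + 1 / p) : p ≤ 42 := by
  by_contra! hp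
  have one_div_face_pos {q : ℕ} (hq : 3 ≤ q) : (0 : ℚ) < 1 / q := by
    have : (0 : ℚ) < q := by exact_mod_cast (by omega : 0 < q)
    positivity
  have hp_inv := one_div_face_pos (by omega : 3 ≤ p)
  have hcard := card_le_three_of_sum_half_sub_one_div_eq ht (by omega) h
  obtain h0 | h1 | h2 | h3 : Multiset.card t = 0 ∨ Multiset.card t = 1 ∨
      Multiset.card t = 2 ∨ Multiset.card t = 3 := by omega
  · rw [Multiset.card_eq_zero.mp h0, Multiset.map_zero, Multiset.sum_zero] at h
    linarith
  · obtain ⟨a, rfl⟩ := Multiset.card_eq_one.mp h1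
    rw [Multiset.map_singleton, Multiset.sum_singleton] at h
    linarith [one_div_face_pos (ht a (by simp))]
  · obtain ⟨a, b, rfl⟩ := Multiset.card_eq_two.mp h2
    simp only [Multiset.insert_eq_cons, Multiset.map_cons, Multiset.map_singleton,
      Multiset.sum_cons, Multiset.sum_singleton] at h
    have := le_fortyTwo_of_one_div_add_one_div_add_one_div_eq_half (p := p)
      (ht a (by simp)) (ht b (by simp)) (by linarith)
    omega
  · obtain ⟨a, b, c, rfl⟩ := Multiset.card_eq_three.mp h3
    simp only [Multiset.insert_eq_cons, Multiset.map_cons, Multiset.map_singleton,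
      Multiset.sum_cons, Multiset.sum_singleton] at h
    have := le_twelve_of_one_div_add_one_div_add_one_div_add_one_div_eq_one (p := p)
      (ht a (by simp)) (ht b (by simp)) (ht c (by simp)) (by linarith)
    omega

/-- In a finite multiset of naturals, each at least 3, with `∑ (1/2 − 1/p) = 1` (in ℚ),
every element is at most 42. -/
theorem curvature_zero_face_size_bound
    (s : Multiset ℕ) (h3 : ∀ p ∈ s, 3 ≤ p)
    (hsum : (s.map (fun p => (1 : ℚ) / 2 - 1 / (p : ℚ))).sum = 1) :
    ∀ p ∈ s, p ≤ 42 := by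
  -- The ascription `(p : ℚ)` makes Lean coerce `s` itself to a `Multiset ℚ` (through `bind` and
  -- `pure`); this undoes the coercion.
  replace hsum : (s.map fun q : ℕ => (1 : ℚ) / 2 - 1 / (q : ℚ)).sum = 1 := by
    simpa only [Multiset.pure_def, Multiset.bind_def, Multiset.bind_singleton, Multiset.map_map,
      Function.comp_def] using hsum
  intro p hp
  obtain ⟨t, rfl⟩ := Multiset.exists_cons_of_mem hp
  rw [Multiset.map_cons, Multiset.sum_cons] at hsum
  exact le_fortyTwo_of_sum_half_sub_one_div_eq (fun q hq => h3 q (Multiset.mem_cons_of_mem hq))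
    (by linarith)
end

section
/- Let p1, p2, p3, p4, p5 be natural numbers with 3 ≤ p1 ≤ p2 ≤ p3 ≤ p4 ≤ p5. Then 1/p1 + 1/p2 + 1/p3 + 1/p4 + 1/p5 = 3/2 (in ℚ) if and only if (p1,p2,p3,p4,p5) equals (3,3,3,4,4) or (3,3,3,3,6). -/
/-- Helper: for naturals `a ≤ b` with `0 < a`, `1/b ≤ 1/a` in `ℚ`. -/
lemma one_div_nat_le (a b : ℕ) (ha : 0 < a) (hab : a ≤ b) :
    (1 : ℚ) / (b : ℚ) ≤ 1 / (a : ℚ) := by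
  apply one_div_le_one_div_of_le (by exact_mod_cast ha) (by exact_mod_cast hab)

/-- For naturals `3 ≤ p1 ≤ p2 ≤ p3 ≤ p4 ≤ p5`, the identity
`1/p1 + 1/p2 + 1/p3 + 1/p4 + 1/p5 = 3/2` (in ℚ) holds iff the tuple is
`(3,3,3,4,4)` or `(3,3,3,3,6)`. -/
theorem curvature_zero_five_faces
    (p1 p2 p3 p4 p5 : ℕ) (hp : 3 ≤ p1) (h12 : p1 ≤ p2) (h23 : p2 ≤ p3)
    (h34 : p3 ≤ p4) (h45 : p4 ≤ p5) :
    (1 : ℚ) / (p1 : ℚ) + 1 / (p2 : ℚ) + 1 / (p3 : ℚ) + 1 / (p4 : ℚ) +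
        1 / (p5 : ℚ) = 3 / 2 ↔
      ((p1, p2, p3, p4, p5) = (3, 3, 3, 4, 4) ∨
        (p1, p2, p3, p4, p5) = (3, 3, 3, 3, 6)) := by
  constructor
  · intro h
    have key : ∀ q : ℕ, ∀ n : ℕ, 0 < n → n ≤ q → (1:ℚ)/q ≤ 1/n := by
      intro q n hn hq
      exact one_div_nat_le n q hn hq
    have hb1 : (1:ℚ)/p1 ≤ 1/3 := key p1 3 (by norm_num) hp
    have hb2 : (1:ℚ)/p2 ≤ 1/3 := key p2 3 (by norm_num) (le_trans hp h12)
    have hb3 : (1:ℚ)/p3 ≤ 1/3 := key p3 3 (by norm_num) (le_trans (le_trans hp h12) h23)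
    have hb4 : (1:ℚ)/p4 ≤ 1/3 := key p4 3 (by norm_num)
      (le_trans (le_trans (le_trans hp h12) h23) h34)
    have hp1 : p1 = 3 := by
      by_contra hne
      have h4 : 4 ≤ p1 := by omega
      have c1 := key p1 4 (by norm_num) h4
      have c2 := key p2 4 (by norm_num) (le_trans h4 h12)
      have c3 := key p3 4 (by norm_num) (le_trans (le_trans h4 h12) h23)
      have c4 := key p4 4 (by norm_num) (le_trans (le_trans (le_trans h4 h12) h23) h34)
      have c5 := key p5 4 (by norm_num)
        (le_trans (le_trans (le_trans (le_trans h4 h12) h23) h34) h45)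
      linarith
    subst hp1
    have hp2 : p2 = 3 := by
      by_contra hne
      have h4 : 4 ≤ p2 := by omega
      have c2 := key p2 4 (by norm_num) h4
      have c3 := key p3 4 (by norm_num) (le_trans h4 h23)
      have c4 := key p4 4 (by norm_num) (le_trans (le_trans h4 h23) h34)
      have c5 := key p5 4 (by norm_num) (le_trans (le_trans (le_trans h4 h23) h34) h45)
      push_cast at h c2 c3 c4 c5
      linarith
    subst hp2
    have hp3 : p3 = 3 := by
      by_contra hne
      have h4 : 4 ≤ p3 := by omega
      have c3 := key p3 4 (by norm_num) h4
      have c4 := key p4 4 (by norm_num) (le_trans h4 h34)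
      have c5 := key p5 4 (by norm_num) (le_trans (le_trans h4 h34) h45)
      push_cast at h c3 c4 c5
      linarith
    subst hp3
    have hp4 : p4 = 3 ∨ p4 = 4 := by
      by_contra hne
      have h5 : 5 ≤ p4 := by omega
      have c4 := key p4 5 (by norm_num) h5
      have c5 := key p5 5 (by norm_num) (le_trans h5 h45)
      push_cast at h c4 c5
      linarith
    have hp5pos : (0:ℚ) < (p5:ℚ) := by
      have : 0 < p5 := by omega
      exact_mod_cast this
    rcases hp4 with h4 | h4
    · subst h4
      right
      have h5 : (1:ℚ)/(p5:ℚ) = 1/6 := by push_cast at h; linarith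
      have : (p5:ℚ) = 6 := by
        field_simp at h5; linarith
      have : p5 = 6 := by exact_mod_cast this
      simp [this]
    · subst h4
      left
      have h5 : (1:ℚ)/(p5:ℚ) = 1/4 := by push_cast at h; linarith
      have : (p5:ℚ) = 4 := by
        field_simp at h5; linarith
      have : p5 = 4 := by exact_mod_cast this
      simp [this]
  · rintro (h | h) <;>
      (simp only [Prod.mk.injEq] at h
       obtain ⟨a, b, c, d, e⟩ := h
       subst a; subst b; subst c; subst d; subst e
       norm_num)
end
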